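/- For a structurally non-Zeno discrete TMDP, the β-iteration stabilizes after |S| steps, and β^{|S|}(s) equals the least total duration over all strategies of player P_n of a path prefix from s satisfying Φ₁ U Φ₂ guaranteed against all strategies of P_p (with value ∞ if no such strategy exists). -/

import Mathlib

/-! Since `β^{i+1} = bellmanOp β^i ≤ β^i`, every `β^i` is a pre-fixpoint of the Bellman
operator, so stabilization at `|S|` follows from `β^{|S|} ≤ g` for every pre-fixpoint `g`.
For this, follow from `s` the moves attaining the infimum in `bellmanOp g`: along them `g`
drops by at least the duration of each move. As long as `g` is finite, a loop on such a path
would have duration `0`, which structural non-Zenoness forbids; so these paths visit distinct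
states and have fewer than `|S|` moves, which `|S|` rounds of the iteration cover.
The game value is then read off the fixpoint `β^{|S|}`: a winning strategy of `P_n` is
bounded step by step through the fixpoint equation, and conversely the minimising moves of
`β^i` form a strategy. -/

open scoped Classical

/-- A finite path of a discrete TMDP (used to state structural non-Zenoness). -/
def IsTMDPPath {S : Type*} (trans : Set (S × ℕ × PMF S)) :
    ∀ n : ℕ, (Fin (n + 1) → S) → (Fin n → ℕ) → Prop :=
  fun n p d =>
    ∀ k : Fin n, ∃ ν : PMF S, (p k.castSucc, d k, ν) ∈ trans ∧ p k.succ ∈ ν.support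

/-- The value iteration `β^i`. -/
noncomputable def betaIter {S : Type*} (trans : Set (S × ℕ × PMF S))
    (Φ₁ Φ₂ : S → Prop) : ℕ → S → ℕ∞
  | 0, s => if Φ₂ s then 0 else ⊤
  | i + 1, s =>
    if Φ₂ s then 0
    else if ¬ Φ₁ s then ⊤
    else ⨅ (d : ℕ) (ν : PMF S) (_ : (s, d, ν) ∈ trans),
      ((d : ℕ∞) + ⨆ s' ∈ ν.support, betaIter trans Φ₁ Φ₂ i s')

/-- `NEnsure trans Φ₁ Φ₂ s D`: in the turn-based game where player `P_n` chooses a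
transition `(s,d,ν) ∈ trans` and player `P_p` adversarially chooses a successor in the
support of `ν` (the round having duration `d`), player `P_n` has a strategy guaranteeing,
against all strategies of `P_p`, a path prefix from `s` satisfying `Φ₁ U Φ₂` of total
duration at most `D`. -/
inductive NEnsure {S : Type*} (trans : Set (S × ℕ × PMF S)) (Φ₁ Φ₂ : S → Prop) :
    S → ℕ → Prop
  | done (s : S) (D : ℕ) : Φ₂ s → NEnsure trans Φ₁ Φ₂ s D
  | step (s : S) (D : ℕ) (d : ℕ) (ν : PMF S) : Φ₁ s → (s, d, ν) ∈ trans → d ≤ D →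
      (∀ s' ∈ ν.support, NEnsure trans Φ₁ Φ₂ s' (D - d)) →
      NEnsure trans Φ₁ Φ₂ s D

section BellmanOperator

variable {S : Type*} (trans : Set (S × ℕ × PMF S)) (Φ₁ Φ₂ : S → Prop)

noncomputable def bellmanOp (f : S → ℕ∞) (s : S) : ℕ∞ :=
  if Φ₂ s then 0
  else if ¬ Φ₁ s then ⊤
  else ⨅ (d : ℕ) (ν : PMF S) (_ : (s, d, ν) ∈ trans), ((d : ℕ∞) + ⨆ s' ∈ ν.support, f s')

theorem betaIter_succ (i : ℕ) :
    betaIter trans Φ₁ Φ₂ (i + 1) = bellmanOp trans Φ₁ Φ₂ (betaIter trans Φ₁ Φ₂ i) :=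
  rfl

theorem bellmanOp_mono : Monotone (bellmanOp trans Φ₁ Φ₂) := by
  intro f g hfg s
  unfold bellmanOp
  split_ifs
  · exact le_rfl
  · gcongr with d ν _ s' _
    exact hfg s'
  · exact le_rfl

theorem betaIter_antitone : Antitone (betaIter trans Φ₁ Φ₂) := by
  refine antitone_nat_of_succ_le fun i => ?_
  induction i with
  | zero =>
    intro s
    show bellmanOp trans Φ₁ Φ₂ _ s ≤ _
    unfold bellmanOp betaIter
    split_ifs <;> simp
  | succ i ih => exact bellmanOp_mono trans Φ₁ Φ₂ ih

variable {trans Φ₁ Φ₂} {f : S → ℕ∞} {s : S}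

theorem bellmanOp_eq_zero_of_goal (h₂ : Φ₂ s) : bellmanOp trans Φ₁ Φ₂ f s = 0 :=
  if_pos h₂

theorem bellmanOp_le_of_mem {d : ℕ} {ν : PMF S} (h₁ : Φ₁ s) (ht : (s, d, ν) ∈ trans) :
    bellmanOp trans Φ₁ Φ₂ f s ≤ (d : ℕ∞) + ⨆ s' ∈ ν.support, f s' := by
  unfold bellmanOp
  split_ifs
  · exact zero_le
  · exact iInf₂_le_of_le d ν (iInf_le _ ht)

theorem exists_mem_trans_of_bellmanOp_le {D : ℕ} (h₂ : ¬ Φ₂ s)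
    (h : bellmanOp trans Φ₁ Φ₂ f s ≤ D) :
    Φ₁ s ∧ ∃ d ν, (s, d, ν) ∈ trans ∧ (d : ℕ∞) + ⨆ s' ∈ ν.support, f s' ≤ D := by
  unfold bellmanOp at h
  rw [if_neg h₂] at h
  by_cases h₁ : Φ₁ s
  · rw [if_neg (not_not.2 h₁)] at h
    have hlt := h.trans_lt ((ENat.lt_add_one_iff (ENat.natCast_ne_top D)).2 le_rfl)
    simp only [iInf_lt_iff] at hlt
    obtain ⟨d, ν, ht, hdν⟩ := hlt
    exact ⟨h₁, d, ν, ht, (ENat.lt_add_one_iff (ENat.natCast_ne_top D)).1 hdν⟩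
  · simp [h₁] at h

end BellmanOperator

namespace NEnsure

variable {S : Type*} {trans : Set (S × ℕ × PMF S)} {Φ₁ Φ₂ : S → Prop}

theorem le_of_le_bellmanOp {g : S → ℕ∞} (hg : g ≤ bellmanOp trans Φ₁ Φ₂ g) {s : S} {D : ℕ}
    (h : NEnsure trans Φ₁ Φ₂ s D) : g s ≤ D := by
  induction h with
  | done s D h₂ => exact (hg s).trans (by simp [bellmanOp_eq_zero_of_goal h₂])
  | step s D d ν h₁ ht hdD _ ih =>
    calc g s ≤ (d : ℕ∞) + ⨆ s' ∈ ν.support, g s' := (hg s).trans (bellmanOp_le_of_mem h₁ ht)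
      _ ≤ d + (D - d : ℕ) := by gcongr; exact iSup₂_le ih
      _ = D := by norm_cast; omega

theorem of_betaIter_le (i : ℕ) {s : S} {D : ℕ} (h : betaIter trans Φ₁ Φ₂ i s ≤ D) :
    NEnsure trans Φ₁ Φ₂ s D := by
  induction i generalizing s D with
  | zero =>
    by_cases h₂ : Φ₂ s
    · exact done s D h₂
    · simp [betaIter, h₂] at h
  | succ i ih =>
    by_cases h₂ : Φ₂ s
    · exact done s D h₂
    obtain ⟨h₁, d, ν, ht, hdν⟩ := exists_mem_trans_of_bellmanOp_le h₂ h
    have hdD : d ≤ D := by exact_mod_cast le_of_add_le_left hdν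
    refine step s D d ν h₁ ht hdD fun s' hs' => ih ?_
    have hsucc : (d : ℕ∞) + betaIter trans Φ₁ Φ₂ i s' ≤ D :=
      le_trans (by gcongr; exact le_iSup₂_of_le s' hs' le_rfl) hdν
    simpa using ENat.le_sub_of_add_le_left (ENat.natCast_ne_top d) hsucc

end NEnsure

section DescendingPath

variable {S : Type*} {trans : Set (S × ℕ × PMF S)} {g : S → ℕ∞} {n : ℕ}
  {p : Fin (n + 1) → S} {d : Fin n → ℕ}

variable (trans g) in
def IsDescendingPath (n : ℕ) (p : Fin (n + 1) → S) (d : Fin n → ℕ) : Prop :=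
  ∀ k : Fin n, (∃ ν : PMF S, (p k.castSucc, d k, ν) ∈ trans ∧ p k.succ ∈ ν.support) ∧
    (d k : ℕ∞) + g (p k.succ) ≤ g (p k.castSucc)

theorem IsDescendingPath.isTMDPPath (h : IsDescendingPath trans g n p d) :
    IsTMDPPath trans n p d :=
  fun k => (h k).1

theorem IsDescendingPath.cons {s : S} {d₀ : ℕ} {ν : PMF S} (ht : (s, d₀, ν) ∈ trans)
    (hν : p 0 ∈ ν.support) (hs : (d₀ : ℕ∞) + g (p 0) ≤ g s)
    (h : IsDescendingPath trans g n p d) :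
    IsDescendingPath trans g (n + 1) (Fin.cons s p) (Fin.cons d₀ d) := by
  intro k
  cases k using Fin.cases with
  | zero => exact ⟨⟨ν, ht, hν⟩, hs⟩
  | succ k => simpa [← Fin.succ_castSucc] using h k

theorem IsDescendingPath.slice (h : IsDescendingPath trans g n p d) (a m : ℕ) (hm : a + m ≤ n) :
    IsDescendingPath trans g m (fun k => p ⟨a + k, by omega⟩) (fun k => d ⟨a + k, by omega⟩) :=
  fun k => h ⟨a + k, by omega⟩

theorem IsDescendingPath.sum_add_le (h : IsDescendingPath trans g n p d) :
    ((∑ k, d k : ℕ) : ℕ∞) + g (p (Fin.last n)) ≤ g (p 0) := by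
  induction n with
  | zero => simp
  | succ n ih =>
    have htail : IsDescendingPath trans g n (fun k => p k.succ) (fun k => d k.succ) := by
      intro k
      have hk := h k.succ
      rwa [Fin.castSucc_succ] at hk
    calc ((∑ k, d k : ℕ) : ℕ∞) + g (p (Fin.last (n + 1)))
        = d 0 + (((∑ k : Fin n, d k.succ : ℕ) : ℕ∞) + g (p (Fin.last n).succ)) := by
          rw [Fin.sum_univ_succ, Fin.succ_last]; push_cast; ring
      _ ≤ d 0 + g (p (0 : Fin (n + 1)).succ) := by gcongr; exact ih htail
      _ ≤ g (p 0) := (h 0).2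

theorem IsDescendingPath.apply_le_apply_zero (h : IsDescendingPath trans g n p d)
    (i : Fin (n + 1)) : g (p i) ≤ g (p 0) := by
  have hi : (⟨0 + i, by omega⟩ : Fin (n + 1)) = i := Fin.ext (zero_add _)
  have := (h.slice 0 i (by omega)).sum_add_le
  simp only [Fin.val_last, hi] at this
  exact le_of_add_le_right this

theorem IsDescendingPath.sum_eq_zero_of_closed (h : IsDescendingPath trans g n p d)
    (hclosed : p 0 = p (Fin.last n)) (hfin : g (p 0) ≠ ⊤) : ∑ k, d k = 0 := by
  have hsum := h.sum_add_le
  rw [← hclosed] at hsum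
  obtain ⟨x, hx⟩ := ENat.ne_top_iff_exists.1 hfin
  rw [← hx] at hsum
  norm_cast at hsum
  omega

/-- By pigeonhole a longer path revisits a state, and the loop in between would have
duration `0`. -/
theorem IsDescendingPath.length_lt_card [Fintype S]
    (hNZ : ∀ (n : ℕ) (p : Fin (n + 1) → S) (d : Fin n → ℕ), 0 < n →
      IsTMDPPath trans n p d → p 0 = p (Fin.last n) → 0 < ∑ k, d k)
    (h : IsDescendingPath trans g n p d) (hfin : g (p 0) ≠ ⊤) : n < Fintype.card S := by
  by_contra! hn
  obtain ⟨a, b, hne, hab⟩ := Fintype.exists_ne_map_eq_of_card_lt p (by simpa using hn)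
  wlog hlt : a < b generalizing a b
  · exact this b a hne.symm hab.symm (lt_of_le_of_ne (not_lt.1 hlt) hne.symm)
  have hloop := h.slice a (b - a) (by omega)
  have hb : (⟨a + (b - a), by omega⟩ : Fin (n + 1)) = b := Fin.ext (by simp; omega)
  have hclosed : p ⟨a + 0, by omega⟩ = p ⟨a + (b - a), by omega⟩ := by rw [hb]; exact hab
  have hzero := hloop.sum_eq_zero_of_closed hclosed
    (ne_top_of_le_ne_top hfin (h.apply_le_apply_zero a))
  have hpos := hNZ (b - a) _ _ (by omega) hloop.isTMDPPath hclosed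
  omega

end DescendingPath

section Stabilization

variable {S : Type*} {trans : Set (S × ℕ × PMF S)} {Φ₁ Φ₂ : S → Prop}

theorem betaIter_le_of_bellmanOp_le {g : S → ℕ∞} (hg : bellmanOp trans Φ₁ Φ₂ g ≤ g)
    (j : ℕ) {s : S} (hs : g s ≠ ⊤)
    (hshort : ∀ p d, IsDescendingPath trans g j p d → p 0 ≠ s) :
    betaIter trans Φ₁ Φ₂ j s ≤ g s := by
  induction j generalizing s with
  | zero => exact absurd rfl (hshort (fun _ => s) Fin.elim0 fun k => k.elim0)
  | succ j ih =>
    by_cases h₂ : Φ₂ s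
    · simp [betaIter_succ, bellmanOp_eq_zero_of_goal h₂]
    obtain ⟨x, hx⟩ := ENat.ne_top_iff_exists.1 hs
    obtain ⟨h₁, d₀, ν, ht, hle⟩ :=
      exists_mem_trans_of_bellmanOp_le h₂ ((hg s).trans_eq hx.symm)
    have hdrop : ∀ s' ∈ ν.support, (d₀ : ℕ∞) + g s' ≤ g s := fun s' hs' =>
      le_trans (by gcongr; exact le_iSup₂_of_le s' hs' le_rfl) (hle.trans_eq hx)
    have hsucc : ∀ s' ∈ ν.support, betaIter trans Φ₁ Φ₂ j s' ≤ g s' := by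
      intro s' hs'
      refine ih (ne_top_of_le_ne_top hs (le_of_add_le_right (hdrop s' hs'))) ?_
      rintro p d hp rfl
      exact hshort _ _ (hp.cons ht hs' (hdrop _ hs')) rfl
    calc betaIter trans Φ₁ Φ₂ (j + 1) s
        ≤ d₀ + ⨆ s' ∈ ν.support, betaIter trans Φ₁ Φ₂ j s' := bellmanOp_le_of_mem h₁ ht
      _ ≤ d₀ + ⨆ s' ∈ ν.support, g s' := by gcongr with s' hs'; exact hsucc s' hs'
      _ ≤ g s := hle.trans_eq hx

theorem betaIter_card_le_of_bellmanOp_le [Fintype S]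
    (hNZ : ∀ (n : ℕ) (p : Fin (n + 1) → S) (d : Fin n → ℕ), 0 < n →
      IsTMDPPath trans n p d → p 0 = p (Fin.last n) → 0 < ∑ k, d k)
    {g : S → ℕ∞} (hg : bellmanOp trans Φ₁ Φ₂ g ≤ g) :
    betaIter trans Φ₁ Φ₂ (Fintype.card S) ≤ g := by
  intro s
  by_cases hs : g s = ⊤
  · simp [hs]
  refine betaIter_le_of_bellmanOp_le hg _ hs fun p d hp hp0 => ?_
  exact (hp.length_lt_card hNZ (by rwa [hp0])).ne rfl

end Stabilization

theorem betaIter_stabilizes_and_is_game_value_general {S : Type*} [Fintype S]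
    (trans : Set (S × ℕ × PMF S)) (Φ₁ Φ₂ : S → Prop)
    (hNZ : ∀ (n : ℕ) (p : Fin (n + 1) → S) (d : Fin n → ℕ), 0 < n →
      IsTMDPPath trans n p d → p 0 = p (Fin.last n) → 0 < ∑ k, d k) :
    (∀ (k : ℕ) (s : S),
      betaIter trans Φ₁ Φ₂ (Fintype.card S + k) s
        = betaIter trans Φ₁ Φ₂ (Fintype.card S) s) ∧
    (∀ (s : S) (D : ℕ),
      NEnsure trans Φ₁ Φ₂ s D ↔ betaIter trans Φ₁ Φ₂ (Fintype.card S) s ≤ (D : ℕ∞)) := by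
  have hstable : ∀ k, betaIter trans Φ₁ Φ₂ (Fintype.card S + k)
      = betaIter trans Φ₁ Φ₂ (Fintype.card S) := fun k =>
    le_antisymm (betaIter_antitone trans Φ₁ Φ₂ (Nat.le_add_right _ _))
      (betaIter_card_le_of_bellmanOp_le hNZ (betaIter_antitone trans Φ₁ Φ₂ (Nat.le_succ _)))
  have hfixed : betaIter trans Φ₁ Φ₂ (Fintype.card S)
      ≤ bellmanOp trans Φ₁ Φ₂ (betaIter trans Φ₁ Φ₂ (Fintype.card S)) := by
    rw [← betaIter_succ, hstable 1]
  exact ⟨fun k s => congrFun (hstable k) s, fun s D =>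
    ⟨fun h => h.le_of_le_bellmanOp hfixed, NEnsure.of_betaIter_le _⟩⟩

/-- For a structurally non-Zeno finite discrete TMDP, the `β`-iteration
stabilizes after `|S|` steps, and `β^{|S|}(s)` is exactly the least total duration of a
path prefix from `s` satisfying `Φ₁ U Φ₂` that player `P_n` can guarantee against all
strategies of `P_p` (value `∞`, i.e. no bound `D` works, if no such strategy exists). -/
theorem betaIter_stabilizes_and_is_game_value {S : Type*} [Fintype S]
    (trans : Set (S × ℕ × PMF S)) (Φ₁ Φ₂ : S → Prop)
    (htotal : ∀ s : S, ∃ d ν, (s, d, ν) ∈ trans)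
    (hNZ : ∀ (n : ℕ) (p : Fin (n + 1) → S) (d : Fin n → ℕ), 0 < n →
      IsTMDPPath trans n p d → p 0 = p (Fin.last n) → 0 < ∑ k, d k) :
    (∀ (k : ℕ) (s : S),
      betaIter trans Φ₁ Φ₂ (Fintype.card S + k) s
        = betaIter trans Φ₁ Φ₂ (Fintype.card S) s) ∧
    (∀ (s : S) (D : ℕ),
      NEnsure trans Φ₁ Φ₂ s D ↔ betaIter trans Φ₁ Φ₂ (Fintype.card S) s ≤ (D : ℕ∞)) :=
  betaIter_stabilizes_and_is_game_value_general trans Φ₁ Φ₂ hNZ
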